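/- arXiv:2206.06092 — 9 statements merged into one kernel-verified Lean document; each statement's English description precedes it below -/
import Mathlib

section
/- For every integer N ≥ 3, the N×N real symmetric matrix W_N = cos(π/N)·I_N + (1/2)(e_1 e_N^T + e_N e_1^T) − Σ_{i=1}^{N−1} (1/2)(e_i e_{i+1}^T + e_{i+1} e_i^T) is positive semidefinite, where e_i denotes the i-th standard basis vector. -/
/-!
Write `W_N = cos(π/N) - (S + Sᵀ)/2`, where `S` is the negacyclic shift: it is orthogonal and
`S^N = -1`. From `T_N((x + y)/2) = (x^N + y^N)/2` for `x y = y x = 1` we get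
`T_N((S + Sᵀ)/2) = -1`, so every eigenvalue `μ` of `(S + Sᵀ)/2` is a solution of
`T_N(μ) = -1`, i.e. `μ = cos(kπ/N)` with `k` odd. Hence `μ ≤ cos(π/N)`.
-/

/-- The dual optimal matrix `W_N = cos(π/N)·I + (1/2)(e₁e_Nᵀ + e_N e₁ᵀ)
    − Σ_{i=1}^{N−1} (1/2)(e_i e_{i+1}ᵀ + e_{i+1} e_iᵀ)` (0-indexed). -/
noncomputable def Wmat (N : ℕ) : Matrix (Fin N) (Fin N) ℝ :=
  Matrix.of fun i j =>
    (if i = j then Real.cos (Real.pi / N) else 0)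
    + (if ((i : ℕ) = 0 ∧ (j : ℕ) = N - 1) ∨ ((i : ℕ) = N - 1 ∧ (j : ℕ) = 0)
        then (1 : ℝ) / 2 else 0)
    - (if (i : ℕ) + 1 = (j : ℕ) ∨ (j : ℕ) + 1 = (i : ℕ) then (1 : ℝ) / 2 else 0)

open Polynomial Polynomial.Chebyshev Real
open scoped Matrix

section Chebyshev

variable {R A : Type*} [CommRing R] [Ring A] [Algebra R A]

theorem Polynomial.Chebyshev.aeval_C_add_of_mul_eq_one {x y : A} (hxy : x * y = 1)
    (hyx : y * x = 1) : ∀ n : ℕ, aeval (x + y) (C R n) = x ^ n + y ^ n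
  | 0 => by simp [map_ofNat, one_add_one_eq_two]
  | 1 => by simp
  | n + 2 => by
    have ih : aeval (x + y) (C R n) = _ := aeval_C_add_of_mul_eq_one hxy hyx n
    have ih' : aeval (x + y) (C R (n + 1 : ℕ)) = _ := aeval_C_add_of_mul_eq_one hxy hyx (n + 1)
    have hx : x * y ^ (n + 1) = y ^ n := by rw [pow_succ', ← mul_assoc, hxy, one_mul]
    have hy : y * x ^ (n + 1) = x ^ n := by rw [pow_succ', ← mul_assoc, hyx, one_mul]
    push_cast at ih' ⊢
    rw [C_add_two, map_sub, map_mul, aeval_X, ih, ih', add_mul, mul_add, mul_add, hx, hy,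
      ← pow_succ', ← pow_succ']
    abel

theorem Polynomial.Chebyshev.aeval_T_half_add_of_mul_eq_one [Invertible (2 : R)] {x y : A}
    (hxy : x * y = 1) (hyx : y * x = 1) (n : ℕ) :
    aeval ((⅟2 : R) • (x + y)) (T R n) = (⅟2 : R) • (x ^ n + y ^ n) := by
  have h2 : (2 : A) * (⅟2 : R) • (x + y) = x + y := by
    rw [mul_smul_comm, two_mul, ← two_smul R, smul_smul, invOf_mul_self, one_smul]
  rw [T_eq_half_mul_C_comp_two_mul_X, map_mul, Polynomial.aeval_C, aeval_comp, map_mul, aeval_X,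
    map_ofNat, h2, aeval_C_add_of_mul_eq_one hxy hyx, Algebra.smul_def]

end Chebyshev

theorem Polynomial.Chebyshev.le_cos_pi_div_of_eval_T_real_eq_neg_one {n : ℕ} (hn : n ≠ 0) {x : ℝ}
    (hx : (T ℝ n).eval x = -1) : x ≤ cos (π / n) := by
  obtain ⟨k, hkn, hk, rfl⟩ := (eval_T_real_eq_neg_one_iff hn x).1 hx
  have hn' : (0 : ℝ) < n := by positivity
  have hk1 : (1 : ℝ) ≤ k := by exact_mod_cast hk.pos
  have hkn' : (k : ℝ) ≤ n := by exact_mod_cast hkn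
  refine cos_le_cos_of_nonneg_of_le_pi (by positivity) ?_ ?_
  · rw [div_le_iff₀ hn']; nlinarith [pi_pos]
  · rw [mul_div_assoc]; exact le_mul_of_one_le_left (by positivity) hk1

theorem spectrum.eval_eq_of_aeval_eq_algebraMap {𝕜 A : Type*} [Field 𝕜] [Ring A] [Algebra 𝕜 A]
    [Nontrivial A] {a : A} {p : 𝕜[X]} {c : 𝕜} (h : aeval a p = algebraMap 𝕜 A c) {μ : 𝕜}
    (hμ : μ ∈ spectrum 𝕜 a) : p.eval μ = c := by
  have := spectrum.subset_polynomial_aeval a p ⟨μ, hμ, rfl⟩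
  rwa [h, spectrum.scalar_eq, Set.mem_singleton_iff] at this

section NegacyclicShift

variable (R : Type*) [Ring R] (n : ℕ)

/-- The transpose of the matrix of multiplication by `X` on `R[X] ⧸ (X ^ (n + 1) + 1)` in the
basis `1, X, …, X ^ n`. -/
def negacyclicShift : Matrix (Fin (n + 1)) (Fin (n + 1)) R :=
  Matrix.of fun i j => if j = i + 1 then (if i = Fin.last n then -1 else 1) else 0

variable {R n}

theorem negacyclicShift_mul_apply (M : Matrix (Fin (n + 1)) (Fin (n + 1)) R) (i j : Fin (n + 1)) :
    (negacyclicShift R n * M) i j = (if i = Fin.last n then -1 else 1) * M (i + 1) j := by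
  simp [negacyclicShift, Matrix.mul_apply, ite_mul]

theorem negacyclicShift_pow_apply {k : ℕ} (hk : k ≤ n + 1) (i j : Fin (n + 1)) :
    (negacyclicShift R n ^ k) i j =
      if (i : ℕ) + k = j then 1 else if (i : ℕ) + k = j + (n + 1) then -1 else 0 := by
  induction k generalizing i with
  | zero =>
    simp only [pow_zero, Matrix.one_apply, Fin.ext_iff, add_zero]
    split_ifs <;> first | rfl | (exfalso; omega)
  | succ k ih =>
    rw [pow_succ', negacyclicShift_mul_apply, ih (by omega), Fin.val_add_one]
    simp only [Fin.ext_iff, Fin.val_last]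
    have := i.isLt
    split_ifs <;> first | (exfalso; omega) | simp

theorem negacyclicShift_pow_succ_self : negacyclicShift R n ^ (n + 1) = -1 := by
  ext i j
  rw [negacyclicShift_pow_apply le_rfl]
  simp only [Matrix.neg_apply, Matrix.one_apply, Fin.ext_iff]
  have := i.isLt
  have := j.isLt
  split_ifs <;> first | (exfalso; omega) | simp

theorem negacyclicShift_mul_transpose : negacyclicShift R n * (negacyclicShift R n)ᵀ = 1 := by
  ext i j
  rw [negacyclicShift_mul_apply]
  simp only [negacyclicShift, Matrix.transpose_apply, Matrix.of_apply, Matrix.one_apply,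
    add_left_inj]
  split_ifs <;> simp_all

theorem mul_negacyclicShift_apply (M : Matrix (Fin (n + 1)) (Fin (n + 1)) R) (i j : Fin (n + 1)) :
    (M * negacyclicShift R n) i j = M i (j - 1) * (if j - 1 = Fin.last n then -1 else 1) := by
  simp [negacyclicShift, Matrix.mul_apply, ← sub_eq_iff_eq_add, mul_ite]

theorem negacyclicShift_transpose_mul : (negacyclicShift R n)ᵀ * negacyclicShift R n = 1 := by
  ext i j
  rw [mul_negacyclicShift_apply]
  simp only [negacyclicShift, Matrix.transpose_apply, Matrix.of_apply, Matrix.one_apply,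
    ← sub_eq_iff_eq_add, sub_left_inj]
  split_ifs <;> simp_all

end NegacyclicShift

theorem Wmat_isHermitian (N : ℕ) : (Wmat N).IsHermitian :=
  Matrix.IsHermitian.ext fun i j => by
    simp only [Wmat, Matrix.of_apply, star_trivial, @eq_comm _ j i]
    congr 2 <;> grind

theorem Wmat_succ_eq {n : ℕ} (hn : n ≠ 0) :
    Wmat (n + 1) = algebraMap ℝ _ (cos (π / ↑(n + 1)))
      - (⅟2 : ℝ) • (negacyclicShift ℝ n + (negacyclicShift ℝ n)ᵀ) := by
  ext i j
  rw [invOf_eq_inv]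
  simp only [Wmat, negacyclicShift, Matrix.of_apply, Matrix.sub_apply, Matrix.smul_apply,
    Matrix.add_apply, Matrix.transpose_apply, Matrix.algebraMap_matrix_apply, smul_eq_mul,
    Fin.ext_iff, Fin.val_add_one, Fin.val_last]
  have := i.isLt
  have := j.isLt
  split_ifs <;> first | (exfalso; omega) | norm_num

theorem Wmat_posSemidef (N : ℕ) (hN : 3 ≤ N) : (Wmat N).PosSemidef := by
  obtain ⟨n, rfl⟩ : ∃ n, N = n + 1 := ⟨N - 1, by omega⟩
  set S := negacyclicShift ℝ n
  have hT : aeval ((⅟2 : ℝ) • (S + Sᵀ)) (T ℝ (n + 1 : ℕ)) = algebraMap ℝ _ (-1) := by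
    rw [aeval_T_half_add_of_mul_eq_one negacyclicShift_mul_transpose
      negacyclicShift_transpose_mul, ← Matrix.transpose_pow, negacyclicShift_pow_succ_self,
      Matrix.transpose_neg, Matrix.transpose_one, map_neg, map_one, ← two_smul ℝ, smul_smul,
      invOf_mul_self, one_smul]
  rw [Matrix.posSemidef_iff_isHermitian_and_spectrum_nonneg]
  refine ⟨Wmat_isHermitian _, ?_⟩
  rw [Wmat_succ_eq (by omega), ← spectrum.singleton_sub_eq]
  rintro _ ⟨_, rfl, μ, hμ, rfl⟩
  exact sub_nonneg.2 <| le_cos_pi_div_of_eval_T_real_eq_neg_one n.succ_ne_zero <|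
    spectrum.eval_eq_of_aeval_eq_algebraMap hT hμ
end

section
/- For every integer N ≥ 3 and for every real number λ with λ ≠ ±2, the characteristic determinant of T_N satisfies det(T_N − λ·I_N) = 2 + μ^N + μ^{−N}, where μ = (−λ + √(λ²−4))/2 (interpreted in ℂ when λ² < 4). -/
section TmatAux

lemma coe_succAbove {n : ℕ} (p : Fin (n+1)) (i : Fin n) :
    ((p.succAbove i : Fin (n+1)) : ℕ) = if (i:ℕ) < (p:ℕ) then (i:ℕ) else (i:ℕ)+1 := by
  rw [Fin.succAbove]
  split_ifs with h h' h'
  · rfl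
  · exact absurd (by simpa [Fin.lt_def] using h) h'
  · exact absurd (by simpa [Fin.lt_def] using h') h
  · rfl

noncomputable def tri (lam : ℂ) (n : ℕ) : Matrix (Fin n) (Fin n) ℂ :=
  Matrix.of fun i j =>
    if (i : ℕ) = j then -lam
    else if (i : ℕ) + 1 = (j : ℕ) ∨ (j : ℕ) + 1 = (i : ℕ) then -1 else 0

lemma updRow_comm {m : ℕ} (M : Matrix (Fin m) (Fin m) ℂ) {i j : Fin m} (hij : i ≠ j)
    (u v : Fin m → ℂ) :
    (M.updateRow i u).updateRow j v = (M.updateRow j v).updateRow i u := by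
  ext a b
  simp only [Matrix.updateRow_apply]
  split_ifs with h1 h2 <;> simp_all

lemma tri_rec (lam : ℂ) (n : ℕ) :
    (tri lam (n+2)).det = -lam * (tri lam (n+1)).det - (tri lam n).det := by
  rw [Matrix.det_succ_row_zero]
  rw [Fin.sum_univ_succ, Fin.sum_univ_succ]
  simp only [Fin.succ_zero_eq_one]
  have h1 : (tri lam (n+2)).submatrix Fin.succ (Fin.succAbove 0) = tri lam (n+1) := by
    ext i j
    simp only [Matrix.submatrix_apply, tri, Matrix.of_apply, Fin.succAbove_zero, Fin.val_succ]
    split_ifs <;> first | rfl | simp_all <;> omega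
  have h2 : ((tri lam (n+2)).submatrix Fin.succ (Fin.succAbove 1)).det = -(tri lam n).det := by
    rw [Matrix.det_succ_column_zero, Fin.sum_univ_succ]
    simp only [Matrix.submatrix_submatrix, Matrix.submatrix_apply, Fin.succ_zero_eq_one,
      Fin.succAbove_zero]
    have h3 : (tri lam (n+2)).submatrix (Fin.succ ∘ Fin.succ) (Fin.succAbove 1 ∘ Fin.succ)
        = tri lam n := by
      ext i j
      simp only [Matrix.submatrix_apply, Function.comp_apply, tri, Matrix.of_apply, Fin.val_succ,
        coe_succAbove, Fin.val_one]
      split_ifs <;> first | rfl | simp_all <;> omega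
    have h4 : ∀ i : Fin n, tri lam (n+2) (Fin.succ (Fin.succ i)) (Fin.succAbove 1 0) = 0 := by
      intro i
      simp only [tri, Matrix.of_apply, Fin.val_succ, coe_succAbove, Fin.val_one, Fin.val_zero]
      split_ifs <;> first | rfl | simp_all <;> omega
    have h5 : tri lam (n+2) 1 0 = -1 := by
      simp only [tri, Matrix.of_apply, Fin.val_one, Fin.val_zero]
      norm_num
    simp only [h4, h3]
    simp only [mul_zero, zero_mul, Finset.sum_const_zero, add_zero]
    have h5' : tri lam (n+2) 1 (Fin.succAbove 1 0) = -1 := by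
      simp [tri, coe_succAbove, Fin.val_one, Fin.val_zero]
    rw [h5']
    simp
  have e0 : tri lam (n+2) 0 0 = -lam := by simp [tri]
  have e1 : tri lam (n+2) 0 1 = -1 := by
    simp only [tri, Matrix.of_apply, Fin.val_one, Fin.val_zero]
    norm_num
  have h6 : ∀ j : Fin n, tri lam (n+2) 0 j.succ.succ = 0 := by
    intro j
    simp only [tri, Matrix.of_apply, Fin.val_succ, Fin.val_zero]
    split_ifs <;> first | rfl | simp_all <;> omega
  simp only [e0, e1, h1, h2, h6]
  simp
  ring

lemma tri_zero (lam : ℂ) : (tri lam 0).det = 1 := Matrix.det_fin_zero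

lemma tri_one (lam : ℂ) : (tri lam 1).det = -lam := by
  rw [Matrix.det_fin_one]; simp [tri]

lemma tri_closed (lam μ ν : ℂ) (hν : μ * ν = 1) (hsum : μ + ν = -lam) (n : ℕ) :
    (μ - ν) * (tri lam n).det = μ^(n+1) - ν^(n+1) := by
  induction n using Nat.strong_induction_on with
  | _ n ih =>
    match n with
    | 0 => rw [tri_zero]; ring
    | 1 => rw [tri_one, ← hsum]; ring
    | (k+2) =>
      rw [tri_rec]
      have i1 := ih (k+1) (by omega)
      have i2 := ih k (by omega)
      have : -lam = μ + ν := hsum.symm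
      rw [this]
      linear_combination (μ + ν) * i1 - i2 + (μ^(k+1) - ν^(k+1)) * hν

-- det of the "subdiagonal-shifted" minor: upper triangular with -1 diagonal
lemma det_shift_up (lam : ℂ) (m : ℕ) :
    ((tri lam (m+1)).submatrix Fin.succ Fin.castSucc).det = (-1)^m := by
  have h : ((tri lam (m+1)).submatrix Fin.succ Fin.castSucc).BlockTriangular id := by
    intro i j hij
    simp only [Matrix.submatrix_apply, tri, Matrix.of_apply, Fin.val_succ, Fin.coe_castSucc]
    simp only [id] at hij
    split_ifs <;> first | rfl | simp_all | omega
    all_goals (exfalso; omega)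
  rw [Matrix.det_of_upperTriangular h]
  have : ∀ i : Fin m, tri lam (m+1) i.succ i.castSucc = -1 := by
    intro i
    simp only [tri, Matrix.of_apply, Fin.val_succ, Fin.coe_castSucc]
    split_ifs <;> first | rfl | simp_all | omega
  simp [this]

lemma det_shift_down (lam : ℂ) (m : ℕ) :
    ((tri lam (m+1)).submatrix Fin.castSucc Fin.succ).det = (-1)^m := by
  rw [← Matrix.det_transpose]
  have : Matrix.transpose ((tri lam (m+1)).submatrix Fin.castSucc Fin.succ)
      = (tri lam (m+1)).submatrix Fin.succ Fin.castSucc := by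
    ext i j
    simp only [Matrix.transpose_apply, Matrix.submatrix_apply, tri, Matrix.of_apply,
      Fin.val_succ, Fin.coe_castSucc]
    split_ifs <;> first | rfl | simp_all | omega
  rw [this, det_shift_up]

lemma detU1 (lam : ℂ) (n : ℕ) :
    ((tri lam (n+3)).updateRow 0 (Pi.single (Fin.last (n+2)) 1)).det = 1 := by
  rw [Matrix.det_succ_row_zero]
  rw [Finset.sum_eq_single (Fin.last (n+2))]
  · have hsub : ((tri lam (n+3)).updateRow 0 (Pi.single (Fin.last (n+2)) 1)).submatrix
        Fin.succ (Fin.succAbove (Fin.last (n+2)))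
        = (tri lam (n+3)).submatrix Fin.succ Fin.castSucc := by
      ext i j
      simp [Matrix.updateRow_ne (Fin.succ_ne_zero i), Fin.succAbove_last]
    rw [hsub, det_shift_up]
    simp [Fin.val_last, ← pow_add]
  · intro j _ hj
    simp [Pi.single_eq_of_ne hj]
  · simp

lemma detU2 (lam : ℂ) (n : ℕ) :
    ((tri lam (n+3)).updateRow (Fin.last (n+2)) (Pi.single 0 1)).det = 1 := by
  rw [Matrix.det_succ_row _ (Fin.last (n+2))]
  rw [Finset.sum_eq_single 0]
  · have hsub : ((tri lam (n+3)).updateRow (Fin.last (n+2)) (Pi.single 0 1)).submatrix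
        (Fin.succAbove (Fin.last (n+2))) (Fin.succAbove 0)
        = (tri lam (n+3)).submatrix Fin.castSucc Fin.succ := by
      ext i j
      simp [Matrix.updateRow_ne (Fin.castSucc_lt_last i).ne, Fin.succAbove_last,
        Fin.succAbove_zero]
    rw [hsub, det_shift_down]
    simp [Fin.val_last, ← pow_add]
  · intro j _ hj
    simp [Pi.single_eq_of_ne hj]
  · simp

lemma detU3 (lam : ℂ) (n : ℕ) :
    (((tri lam (n+3)).updateRow 0 (Pi.single (Fin.last (n+2)) 1)).updateRow
        (Fin.last (n+2)) (Pi.single 0 1)).det = -(tri lam (n+1)).det := by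
  set A := ((tri lam (n+3)).updateRow 0 (Pi.single (Fin.last (n+2)) 1)).updateRow
      (Fin.last (n+2)) (Pi.single 0 1) with hA
  have hrow0 : ∀ j, A 0 j = (Pi.single (Fin.last (n+2)) 1 : Fin (n+3) → ℂ) j := by
    intro j
    rw [hA, Matrix.updateRow_ne (Fin.last_pos (n := n+1)).ne, Matrix.updateRow_self]
  rw [Matrix.det_succ_row_zero]
  rw [Finset.sum_eq_single (Fin.last (n+2))]
  · rw [hrow0]
    simp only [Pi.single_eq_same, mul_one, Fin.val_last]
    rw [Matrix.det_succ_row _ (Fin.last (n+1))]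
    rw [Finset.sum_eq_single 0]
    · have he : A.submatrix Fin.succ (Fin.succAbove (Fin.last (n+2)))
          (Fin.last (n+1)) 0 = 1 := by
        simp only [Matrix.submatrix_apply, Fin.succAbove_last, Fin.succ_last]
        rw [hA, Matrix.updateRow_self]
        simp [Fin.ext_iff]
      rw [he]
      have hsub : (A.submatrix Fin.succ (Fin.succAbove (Fin.last (n+2)))).submatrix
          (Fin.succAbove (Fin.last (n+1))) (Fin.succAbove 0) = tri lam (n+1) := by
        ext i j
        simp only [Matrix.submatrix_apply, Fin.succAbove_last, Fin.succAbove_zero]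
        rw [hA]
        rw [Matrix.updateRow_ne, Matrix.updateRow_ne]
        · simp only [tri, Matrix.of_apply, Fin.val_succ, Fin.coe_castSucc]
          split_ifs <;> first | rfl | simp_all | omega
        · exact Fin.succ_ne_zero _
        · simp only [ne_eq, Fin.ext_iff, Fin.val_succ, Fin.coe_castSucc, Fin.val_last]
          omega
      rw [hsub]
      simp only [Fin.val_last, Fin.val_zero, pow_zero, mul_one, add_zero, one_mul]
      rw [← mul_assoc, ← pow_add, show n+2+(n+1) = 2*(n+1)+1 by ring, pow_succ, pow_mul]
      simp
    · intro j _ hj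
      have hz : A (Fin.last (n+2)) (Fin.castSucc j) = 0 := by
        rw [hA, Matrix.updateRow_self]
        apply Pi.single_eq_of_ne
        simp only [ne_eq, Fin.ext_iff, Fin.coe_castSucc, Fin.val_zero]
        exact fun h => hj (Fin.ext h)
      simp [hz]
    · simp
  · intro j _ hj
    rw [hrow0]
    simp [Pi.single_eq_of_ne hj]
  · simp


lemma corner_det (lam : ℂ) (n : ℕ) :
    (((tri lam (n+3)).updateRow 0 (tri lam (n+3) 0 + Pi.single (Fin.last (n+2)) 1)).updateRow
      (Fin.last (n+2)) (tri lam (n+3) (Fin.last (n+2)) + Pi.single 0 1)).det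
    = (tri lam (n+3)).det - (tri lam (n+1)).det + 2 := by
  have h0l : (0 : Fin (n+3)) ≠ Fin.last (n+2) := (Fin.last_pos (n := n+1)).ne
  set T := tri lam (n+3) with hT
  set X := T.updateRow 0 (T 0 + Pi.single (Fin.last (n+2)) 1) with hX
  rw [Matrix.det_updateRow_add]
  have e1 : X.updateRow (Fin.last (n+2)) (T (Fin.last (n+2))) = X := by
    conv_lhs => rw [show T (Fin.last (n+2)) = X (Fin.last (n+2)) from
      (Matrix.updateRow_ne h0l.symm).symm]
    exact Matrix.updateRow_eq_self _ _
  rw [e1]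
  have e2 : X.det = T.det + 1 := by
    rw [hX, Matrix.det_updateRow_add, Matrix.updateRow_eq_self, detU1]
  have e3 : (X.updateRow (Fin.last (n+2)) (Pi.single 0 1)).det
      = 1 - (tri lam (n+1)).det := by
    rw [hX, updRow_comm _ h0l, Matrix.det_updateRow_add]
    have f1 : ((T.updateRow (Fin.last (n+2)) (Pi.single 0 1)).updateRow 0 (T 0)).det = 1 := by
      conv_lhs => rw [show T 0 = (T.updateRow (Fin.last (n+2)) (Pi.single 0 1)) 0 from
        (Matrix.updateRow_ne h0l).symm]
      rw [Matrix.updateRow_eq_self]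
      exact detU2 lam n
    have f2 : ((T.updateRow (Fin.last (n+2)) (Pi.single 0 1)).updateRow 0
        (Pi.single (Fin.last (n+2)) 1)).det = -(tri lam (n+1)).det := by
      rw [updRow_comm _ h0l.symm]
      exact detU3 lam n
    rw [f1, f2]; ring
  rw [e2, e3]; ring

end TmatAux

/-- The matrix `T_N` with −1 on the first off-diagonals and +1 at the corners. -/
noncomputable def Tmat (N : ℕ) : Matrix (Fin N) (Fin N) ℝ :=
  Matrix.of fun i j =>
    (if (i : ℕ) + 1 = (j : ℕ) ∨ (j : ℕ) + 1 = (i : ℕ) then (-1 : ℝ) else 0)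
    + (if ((i : ℕ) = 0 ∧ (j : ℕ) = N - 1) ∨ ((i : ℕ) = N - 1 ∧ (j : ℕ) = 0)
        then (1 : ℝ) else 0)

set_option maxHeartbeats 1000000 in
/-- For λ ≠ ±2 and μ a root of μ² + λμ + 1 = 0 (i.e. μ = (−λ + √(λ²−4))/2, an eigenvalue
    of [[−λ,−1],[1,0]]), we have det(T_N − λ·I) = 2 + μ^N + μ^{−N}. -/
theorem Tmat_charpoly (N : ℕ) (hN : 3 ≤ N) (lam : ℝ) (h2 : lam ≠ 2) (h2' : lam ≠ -2)
    (μ : ℂ) (hμ : μ ^ 2 + (lam : ℂ) * μ + 1 = 0) :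
    ((Tmat N).map (fun x => (x : ℂ)) - (lam : ℂ) • 1).det = 2 + μ ^ N + (μ ^ N)⁻¹ := by
  obtain ⟨n, rfl⟩ : ∃ n, N = n + 3 := ⟨N - 3, by omega⟩
  have hM : (Tmat (n+3)).map (fun x => (x:ℂ)) - (lam:ℂ) • 1
      = ((tri (lam:ℂ) (n+3)).updateRow 0
          (tri (lam:ℂ) (n+3) 0 + Pi.single (Fin.last (n+2)) 1)).updateRow
        (Fin.last (n+2)) (tri (lam:ℂ) (n+3) (Fin.last (n+2)) + Pi.single 0 1) := by
    ext i j
    have hi := i.isLt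
    have hj := j.isLt
    simp only [Matrix.sub_apply, Matrix.map_apply, Tmat, Matrix.of_apply, Matrix.smul_apply,
      Matrix.one_apply, Matrix.updateRow_apply, tri, Pi.add_apply, Pi.single_apply,
      smul_eq_mul, Fin.ext_iff, Fin.val_last, Fin.val_zero]
    push_cast
    split_ifs <;>
      first
        | (exfalso
           (try simp only [or_false, false_or, and_false, false_and] at *)
           omega)
        | norm_num
  rw [hM, corner_det]
  have hμ0 : μ ≠ 0 := by
    intro h; rw [h] at hμ; norm_num at hμ
  have hν : μ * μ⁻¹ = 1 := mul_inv_cancel₀ hμ0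
  have hsum : μ + μ⁻¹ = -(lam:ℂ) := by
    field_simp
    linear_combination hμ
  have hne : μ - μ⁻¹ ≠ 0 := by
    intro h
    have hsq : (μ - 1) * (μ + 1) = 0 := by linear_combination μ * h + hν
    rcases mul_eq_zero.mp hsq with h1 | h1
    · have : (lam:ℂ) = -2 := by
        have : μ = 1 := by linear_combination h1
        rw [this] at hμ
        linear_combination hμ
      exact h2' (by exact_mod_cast this)
    · have : (lam:ℂ) = 2 := by
        have : μ = -1 := by linear_combination h1
        rw [this] at hμ
        linear_combination -hμ
      exact h2 (by exact_mod_cast this)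
  have key := tri_closed lam μ μ⁻¹ hν hsum
  have hd : (tri lam (n+3)).det - (tri lam (n+1)).det = μ^(n+3) + (μ⁻¹)^(n+3) := by
    apply mul_left_cancel₀ hne
    rw [mul_sub]
    linear_combination key (n+3) - key (n+1) + (μ^(n+2) - (μ⁻¹)^(n+2)) * hν
  rw [hd, ← inv_pow]
  ring
end

section
/- For every integer N ≥ 3, if X is an N×N real symmetric matrix with zero diagonal satisfying X·W_N = 0, where W_N = cos(π/N)·I_N + (1/2)(e_1 e_N^T + e_N e_1^T) − Σ_{i=1}^{N−1}(1/2)(e_i e_{i+1}^T + e_{i+1} e_i^T), then X = 0. -/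
theorem Fin.eq_zero_of_linear_recurrence {R : Type*} [NonUnitalNonAssocSemiring R] {n : ℕ}
    (a b : R) (f : Fin n → R)
    (hf : ∀ j (hj : j + 2 < n), f ⟨j + 2, hj⟩ = a * f ⟨j + 1, by omega⟩ + b * f ⟨j, by omega⟩)
    (h0 : ∀ h : 0 < n, f ⟨0, h⟩ = 0) (h1 : ∀ h : 1 < n, f ⟨1, h⟩ = 0) : f = 0 := by
  funext ⟨k, hk⟩
  induction k using Nat.strong_induction_on with
  | _ k ih =>
    match k, hk with
    | 0, hk => exact h0 hk
    | 1, hk => exact h1 hk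
    | j + 2, hk => simp [hf j hk, ih j (by omega), ih (j + 1) (by omega)]

theorem Real.cos_pi_div_pos {N : ℕ} (hN : 2 < N) : 0 < Real.cos (Real.pi / N) := by
  apply Real.cos_pos_of_mem_Ioo
  constructor
  · linarith [show 0 < Real.pi / N by positivity, Real.pi_pos]
  · exact div_lt_div_of_pos_left Real.pi_pos two_pos (by exact_mod_cast hN)

theorem Wmat_col_succ {N j : ℕ} (hj : j + 2 < N) :
    (fun k => Wmat N k ⟨j + 1, by omega⟩) =
      Real.cos (Real.pi / N) • Pi.single ⟨j + 1, by omega⟩ 1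
        - (1 / 2 : ℝ) • Pi.single ⟨j, by omega⟩ 1 - (1 / 2 : ℝ) • Pi.single ⟨j + 2, hj⟩ 1 := by
  funext ⟨k, hk⟩
  simp only [Wmat, Matrix.of_apply, Pi.sub_apply, Pi.smul_apply, Pi.single_apply, Fin.ext_iff,
    smul_eq_mul, Nat.add_one_ne_zero, and_false, or_false]
  split_ifs <;> first | ring1 | omega

theorem Wmat_mul_row_recurrence {N : ℕ} {X : Matrix (Fin N) (Fin N) ℝ} (h : X * Wmat N = 0)
    (i : Fin N) (j : ℕ) (hj : j + 2 < N) :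
    X i ⟨j + 2, hj⟩ =
      2 * Real.cos (Real.pi / N) * X i ⟨j + 1, by omega⟩ + (-1) * X i ⟨j, by omega⟩ := by
  have hcol := congrFun (congrFun h i) ⟨j + 1, by omega⟩
  rw [Matrix.mul_apply', Wmat_col_succ hj] at hcol
  simp only [dotProduct_sub, dotProduct_smul, dotProduct_single, smul_eq_mul, mul_one,
    Matrix.zero_apply] at hcol
  linarith

theorem apply_zero_one_eq_zero_of_mul_Wmat_eq_zero {N : ℕ} (hN : 3 ≤ N)
    {X : Matrix (Fin N) (Fin N) ℝ} (hsymm : X.IsSymm) (hdiag : ∀ i, X i i = 0)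
    (h : X * Wmat N = 0) : X ⟨0, by omega⟩ ⟨1, by omega⟩ = 0 := by
  let e₀ : Fin N := ⟨0, by omega⟩
  let e₁ : Fin N := ⟨1, by omega⟩
  let e₂ : Fin N := ⟨2, by omega⟩
  set c := Real.cos (Real.pi / N)
  have r₀ : X e₀ e₂ = 2 * c * X e₀ e₁ + -1 * X e₀ e₀ := Wmat_mul_row_recurrence h e₀ 0 hN
  have r₁ : X e₁ e₂ = 2 * c * X e₁ e₁ + -1 * X e₁ e₀ := Wmat_mul_row_recurrence h e₁ 0 hN
  have r₂ : X e₂ e₂ = 2 * c * X e₂ e₁ + -1 * X e₂ e₀ := Wmat_mul_row_recurrence h e₂ 0 hN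
  rw [hdiag] at r₀
  rw [hdiag, hsymm.apply e₀ e₁] at r₁
  rw [hdiag, hsymm.apply e₁ e₂, hsymm.apply e₀ e₂] at r₂
  have hX₂₂ : 4 * c * X e₀ e₁ = 0 := by linear_combination r₂ + 2 * c * r₁ - r₀
  exact (mul_eq_zero.mp hX₂₂).resolve_left
    (mul_ne_zero four_ne_zero (Real.cos_pi_div_pos hN).ne')

theorem dual_nondegenerate (N : ℕ) (hN : 3 ≤ N) (X : Matrix (Fin N) (Fin N) ℝ)
    (hsymm : X.IsSymm) (hdiag : ∀ i, X i i = 0) (h : X * Wmat N = 0) : X = 0 := by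
  let e₀ : Fin N := ⟨0, by omega⟩
  let e₁ : Fin N := ⟨1, by omega⟩
  have row_eq_zero (i : Fin N) (h0 : X i e₀ = 0) (h1 : X i e₁ = 0) : X i = 0 :=
    Fin.eq_zero_of_linear_recurrence _ _ _ (Wmat_mul_row_recurrence h i) (fun _ => h0)
      (fun _ => h1)
  have hsym (i k : Fin N) : X i k = X k i := hsymm.apply k i
  have hd : X e₀ e₁ = 0 := apply_zero_one_eq_zero_of_mul_Wmat_eq_zero hN hsymm hdiag h
  have hrow₀ : X e₀ = 0 := row_eq_zero e₀ (hdiag e₀) hd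
  have hrow₁ : X e₁ = 0 := row_eq_zero e₁ (by rw [hsym, hd]) (hdiag e₁)
  ext i k
  rw [row_eq_zero i (by rw [hsym, hrow₀]; rfl) (by rw [hsym, hrow₁]; rfl)]
  rfl
end

section
/- For every integer N ≥ 3, the optimizer of the N-cycle SDP is unique: there is exactly one N×N real symmetric positive semidefinite matrix X with unit diagonal such that Σ_{i=1}^{N−1} X_{i,i+1} − X_{N,1} = N·cos(π/N). -/
/-- Entry of a matrix indexed by naturals (0 outside the range). -/
noncomputable def entry {N : ℕ} (X : Matrix (Fin N) (Fin N) ℝ) (i j : ℕ) : ℝ :=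
  if h : i < N ∧ j < N then X ⟨i, h.1⟩ ⟨j, h.2⟩ else 0

/-- The N-cycle objective Σ_{i=1}^{N−1} X_{i,i+1} − X_{N,1} (0-indexed). -/
noncomputable def cycObj (N : ℕ) (X : Matrix (Fin N) (Fin N) ℝ) : ℝ :=
  (∑ i ∈ Finset.range (N - 1), entry X i (i + 1)) - entry X (N - 1) 0

/-!
Write a feasible `X` as the Gram matrix of unit vectors `v₀, …, v_{N-1}`. Expanding `v` in the
antiperiodic Fourier basis `j ↦ e^{ijφ}`, `φ = (2k+1)π/N`, turns `Σ ⟪vⱼ, vⱼ₊₁⟫ - ⟪v_{N-1}, v₀⟫` into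
`(1/N) Σₖ cos((2k+1)π/N) · ‖v̂ₖ‖²`, hence it is at most `cos(π/N) Σ ‖vⱼ‖²` for all vectors. At an
optimum `v` is a zero of this nonnegative quadratic form, so it lies in its kernel: perturbing one
`vⱼ` shows `vⱼ₋₁ + vⱼ₊₁ = 2 cos(π/N) vⱼ`. Unit vectors obeying this recurrence walk along a great
circle in steps of `π/N`, so `⟪vᵢ, vⱼ⟫ = cos((i-j)π/N)`.
-/

open Real Finset
open scoped InnerProductSpace ComplexOrder

lemma two_mul_sin_mul_sum_cos_odd_mul (α : ℝ) (n : ℕ) :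
    2 * sin α * ∑ k ∈ range n, cos ((2 * k + 1) * α) = sin (2 * n * α) := by
  induction n with
  | zero => simp
  | succ n ih =>
    rw [sum_range_succ, mul_add, ih, two_mul_sin_mul_cos]
    push_cast
    ring_nf
    rw [sin_neg]
    ring

lemma sum_cos_odd_mul_eq_zero {N : ℕ} {d : ℤ} (hd : ¬ (N : ℤ) ∣ d) :
    ∑ k ∈ range N, cos ((2 * k + 1) * (d * π / N)) = 0 := by
  rcases N.eq_zero_or_pos with rfl | hN
  · simp
  have hsin : sin (d * π / N) ≠ 0 := by
    rw [Ne, sin_eq_zero_iff]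
    rintro ⟨n, hn⟩
    refine hd ⟨n, ?_⟩
    rw [eq_div_iff (by positivity)] at hn
    have : (d : ℝ) = N * n := mul_right_cancel₀ pi_ne_zero (by rw [← hn]; ring)
    exact_mod_cast this
  have h := two_mul_sin_mul_sum_cos_odd_mul (d * π / N) N
  rw [show 2 * (N : ℝ) * (d * π / N) = (2 * d : ℤ) * π by push_cast; field_simp,
    sin_int_mul_pi] at h
  simpa [hsin] using h

lemma sum_cos_odd_mul_int {N : ℕ} {d : ℤ} (h₁ : -N < d) (h₂ : d ≤ N) :
    ∑ k ∈ range N, cos ((2 * k + 1) * (d * π / N)) =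
      if d = 0 then (N : ℝ) else if d = N then -(N : ℝ) else 0 := by
  split_ifs with h0 hN
  · simp [h0]
  · have hN0 : (N : ℝ) ≠ 0 := by rintro h; simp_all
    have hcos (k : ℕ) : cos ((2 * k + 1) * (d * π / N)) = -1 := by
      rw [hN, show (2 * k + 1 : ℝ) * ((N : ℤ) * π / N) = (2 * k + 1 : ℕ) * π by
        push_cast; field_simp, cos_nat_mul_pi, pow_succ, pow_mul]
      simp
    simp [hcos]
  · refine sum_cos_odd_mul_eq_zero fun ⟨m, hm⟩ => ?_
    subst hm
    rcases lt_trichotomy m 0 with h | h | h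
    · nlinarith
    · simp_all
    · exact hN (le_antisymm h₂ (by nlinarith))

lemma sum_mul_sum_cos_odd_mul_sub_add_one {N i : ℕ} (hi : i < N) (f : ℕ → ℝ) :
    ∑ j ∈ range N, f j * ∑ k ∈ range N, cos ((2 * k + 1) * (((i - j + 1 : ℤ) : ℝ) * π / N)) =
      N * if i + 1 < N then f (i + 1) else -f 0 := by
  set j₀ := if i + 1 < N then i + 1 else 0
  have hj₀ : j₀ ∈ range N := by simp only [j₀, mem_range]; split_ifs <;> omega
  rw [sum_eq_single_of_mem j₀ hj₀ fun j hj hne => ?_]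
  · simp only [j₀]
    split_ifs with h <;> rw [sum_cos_odd_mul_int (by omega) (by omega)] <;>
      split_ifs <;> first | omega | ring
  · rw [mem_range] at hj
    rw [sum_cos_odd_mul_int (by omega) (by omega)]
    simp only [j₀] at hne
    split_ifs at hne ⊢ <;> first | omega | simp

lemma cos_le_cos_of_le_of_le_two_pi_sub {a x : ℝ} (ha : 0 ≤ a) (h₁ : a ≤ x) (h₂ : x ≤ 2 * π - a) :
    cos x ≤ cos a := by
  rcases le_total x π with hx | hx
  · exact cos_le_cos_of_nonneg_of_le_pi ha hx h₁
  · rw [← cos_two_pi_sub x]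
    exact cos_le_cos_of_nonneg_of_le_pi ha (by linarith) (by linarith)

lemma cos_odd_mul_pi_div_le {N k : ℕ} (hk : k < N) : cos ((2 * k + 1) * π / N) ≤ cos (π / N) := by
  have hN : (0 : ℝ) < N := Nat.cast_pos.mpr (by omega)
  have hk' : (k : ℝ) + 1 ≤ N := by exact_mod_cast hk
  refine cos_le_cos_of_le_of_le_two_pi_sub (by positivity) ?_ ?_
  · gcongr
    nlinarith [pi_pos, (k.cast_nonneg : (0 : ℝ) ≤ k)]
  · rw [div_le_iff₀ hN, sub_mul, div_mul_cancel₀ _ hN.ne']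
    nlinarith [pi_pos]

section CycleForm

variable {E : Type*} [NormedAddCommGroup E] [InnerProductSpace ℝ E]

lemma sum_sum_cos_sub_mul_inner_nonneg {ι : Type*} (s : Finset ι) (a : ι → ℝ) (v : ι → E) :
    0 ≤ ∑ i ∈ s, ∑ j ∈ s, cos (a i - a j) * ⟪v i, v j⟫_ℝ := by
  have : ∑ i ∈ s, ∑ j ∈ s, cos (a i - a j) * ⟪v i, v j⟫_ℝ =
      ‖∑ i ∈ s, cos (a i) • v i‖ ^ 2 + ‖∑ i ∈ s, sin (a i) • v i‖ ^ 2 := by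
    simp only [← real_inner_self_eq_norm_sq, sum_inner, inner_sum, real_inner_smul_left,
      real_inner_smul_right, cos_sub, ← sum_add_distrib]
    exact sum_congr rfl fun i _ => sum_congr rfl fun j _ => by rw [real_inner_comm]; ring
  rw [this]
  positivity

noncomputable def cycleForm (N : ℕ) (v : ℕ → E) : ℝ :=
  ∑ i ∈ range (N - 1), ⟪v i, v (i + 1)⟫_ℝ - ⟪v (N - 1), v 0⟫_ℝ

/-- `‖∑ⱼ e^{ijφ} vⱼ‖²` for the frequency `φ = (2k+1)π/N`, written with cosines so that `E` can stay
real. These `N` frequencies are the `φ` with `e^{iNφ} = -1`, i.e. the spectrum of the cyclic shift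
with the sign flip that appears in `cycleForm`. -/
noncomputable def antiperiodicEnergy (N : ℕ) (v : ℕ → E) (k : ℕ) : ℝ :=
  ∑ i ∈ range N, ∑ j ∈ range N,
    cos (i * ((2 * k + 1) * π / N) - j * ((2 * k + 1) * π / N)) * ⟪v i, v j⟫_ℝ

lemma antiperiodicEnergy_nonneg (N : ℕ) (v : ℕ → E) (k : ℕ) : 0 ≤ antiperiodicEnergy N v k :=
  sum_sum_cos_sub_mul_inner_nonneg _ _ _

lemma antiperiodicEnergy_eq (N : ℕ) (v : ℕ → E) (k : ℕ) :
    antiperiodicEnergy N v k = ∑ i ∈ range N, ∑ j ∈ range N,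
      ⟪v i, v j⟫_ℝ * cos ((2 * k + 1) * (((i - j : ℤ) : ℝ) * π / N)) := by
  refine sum_congr rfl fun i _ => sum_congr rfl fun j _ => ?_
  rw [mul_comm]
  congr 2
  push_cast
  ring

lemma sum_antiperiodicEnergy (N : ℕ) (v : ℕ → E) :
    ∑ k ∈ range N, antiperiodicEnergy N v k = N * ∑ i ∈ range N, ‖v i‖ ^ 2 := by
  simp only [antiperiodicEnergy_eq]
  rw [sum_comm, mul_sum]
  refine sum_congr rfl fun i hi => ?_
  rw [sum_comm]
  simp_rw [← mul_sum]
  rw [sum_eq_single_of_mem i hi fun j hj hji => ?_]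
  · rw [sum_cos_odd_mul_int (by simp at hi; omega) (by simp at hi; omega)]
    simp [mul_comm]
  · rw [sum_cos_odd_mul_int (by simp at hi hj; omega) (by simp at hi hj; omega)]
    simp at hi hj
    rw [if_neg (by omega), if_neg (by omega), mul_zero]

lemma cos_mul_antiperiodicEnergy (N : ℕ) (v : ℕ → E) (k : ℕ) :
    cos ((2 * k + 1) * π / N) * antiperiodicEnergy N v k = ∑ i ∈ range N, ∑ j ∈ range N,
      ⟪v i, v j⟫_ℝ * cos ((2 * k + 1) * (((i - j + 1 : ℤ) : ℝ) * π / N)) := by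
  set A : ℕ → ℕ → ℝ := fun i j => cos ((2 * k + 1) * (((i - j + 1 : ℤ) : ℝ) * π / N))
  have hprod (i j : ℕ) :
      cos ((2 * k + 1) * π / N) * cos ((2 * k + 1) * (((i - j : ℤ) : ℝ) * π / N)) =
        (A i j + A j i) / 2 := by
    simp only [A]
    push_cast
    rw [show (2 * k + 1) * ((i - j + 1) * π / N) =
        (2 * k + 1) * ((i - j) * π / N) + (2 * k + 1) * π / N by ring,
      show (2 * k + 1) * ((j - i + 1) * π / N) =
        -((2 * k + 1) * ((i - j) * π / N) - (2 * k + 1) * π / N) by ring,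
      cos_neg, cos_add, cos_sub]
    ring
  calc cos ((2 * k + 1) * π / N) * antiperiodicEnergy N v k
      = (∑ i ∈ range N, ∑ j ∈ range N, ⟪v i, v j⟫_ℝ * A i j +
          ∑ j ∈ range N, ∑ i ∈ range N, ⟪v i, v j⟫_ℝ * A j i) / 2 := by
        rw [antiperiodicEnergy_eq, mul_sum, sum_comm (s := range N) (t := range N)
          (f := fun j i => ⟪v i, v j⟫_ℝ * A j i), ← sum_add_distrib, sum_div]
        refine sum_congr rfl fun i _ => ?_
        rw [mul_sum, ← sum_add_distrib, sum_div]
        refine sum_congr rfl fun j _ => ?_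
        rw [mul_left_comm, hprod]
        ring
    _ = ∑ i ∈ range N, ∑ j ∈ range N, ⟪v i, v j⟫_ℝ * A i j := by
        rw [sum_congr rfl fun j _ => sum_congr rfl fun i _ => by rw [real_inner_comm (v i)]]
        ring

lemma sum_cos_mul_antiperiodicEnergy (N : ℕ) (v : ℕ → E) :
    ∑ k ∈ range N, cos ((2 * k + 1) * π / N) * antiperiodicEnergy N v k = N * cycleForm N v := by
  simp_rw [cos_mul_antiperiodicEnergy]
  rw [sum_comm]
  have hrow : ∀ i ∈ range N, ∑ k ∈ range N, ∑ j ∈ range N,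
      ⟪v i, v j⟫_ℝ * cos ((2 * k + 1) * (((i - j + 1 : ℤ) : ℝ) * π / N)) =
      N * if i + 1 < N then ⟪v i, v (i + 1)⟫_ℝ else -⟪v i, v 0⟫_ℝ := fun i hi => by
    rw [sum_comm]
    simp_rw [← mul_sum]
    exact sum_mul_sum_cos_odd_mul_sub_add_one (mem_range.mp hi) _
  rw [sum_congr rfl hrow, ← mul_sum]
  rcases N with _ | n
  · simp
  rw [sum_range_succ, if_neg (by omega), cycleForm, Nat.add_sub_cancel,
    sum_congr rfl fun i hi => if_pos (by simp at hi; omega)]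
  ring

lemma cycleForm_le {N : ℕ} (hN : 0 < N) (v : ℕ → E) :
    cycleForm N v ≤ cos (π / N) * ∑ i ∈ range N, ‖v i‖ ^ 2 := by
  have hgap : 0 ≤ ∑ k ∈ range N,
      (cos (π / N) - cos ((2 * k + 1) * π / N)) * antiperiodicEnergy N v k :=
    sum_nonneg fun k hk => mul_nonneg (sub_nonneg.2 (cos_odd_mul_pi_div_le (mem_range.1 hk)))
      (antiperiodicEnergy_nonneg N v k)
  simp only [sub_mul, sum_sub_distrib, ← mul_sum, sum_antiperiodicEnergy,
    sum_cos_mul_antiperiodicEnergy] at hgap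
  refine le_of_mul_le_mul_left ?_ (Nat.cast_pos.mpr hN : (0 : ℝ) < N)
  linarith

lemma cycleForm_sub_single {N j : ℕ} (hj : j + 2 < N) (v : ℕ → E) (w : E) :
    cycleForm N (v - Pi.single (j + 1) w) = cycleForm N v - ⟪v j + v (j + 2), w⟫_ℝ := by
  set δ : ℕ → E := Pi.single (j + 1) w with hδ
  have hl (i : ℕ) : ⟪δ i, v (i + 1)⟫_ℝ = if i = j + 1 then ⟪w, v (j + 2)⟫_ℝ else 0 := by
    rw [hδ, Pi.single_apply]; split_ifs <;> simp_all
  have hr (i : ℕ) : ⟪v i, δ (i + 1)⟫_ℝ = if i = j then ⟪v j, w⟫_ℝ else 0 := by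
    rw [hδ, Pi.single_apply]; split_ifs <;> simp_all
  have hlr (i : ℕ) : ⟪δ i, δ (i + 1)⟫_ℝ = 0 := by
    simp only [hδ, Pi.single_apply]; split_ifs <;> simp_all
  have hN : δ (N - 1) = 0 := Pi.single_eq_of_ne (by omega) _
  have h0 : δ 0 = 0 := Pi.single_eq_of_ne (by omega) _
  simp only [cycleForm, Pi.sub_apply, inner_sub_left, inner_sub_right, sum_sub_distrib, hl, hr,
    hlr, hN, h0, sum_ite_eq', mem_range,
    if_pos (show j + 1 < N - 1 by omega), if_pos (show j < N - 1 by omega), inner_add_right,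
    inner_zero_left, inner_zero_right, sum_const_zero, real_inner_comm w]
  ring

lemma sum_norm_sq_sub_single {N j : ℕ} (hj : j < N) (v : ℕ → E) (w : E) :
    ∑ i ∈ range N, ‖(v - Pi.single j w : ℕ → E) i‖ ^ 2 =
      ∑ i ∈ range N, ‖v i‖ ^ 2 - 2 * ⟪v j, w⟫_ℝ + ‖w‖ ^ 2 := by
  simp only [Pi.sub_apply, norm_sub_sq_real, sum_add_distrib, sum_sub_distrib, ← mul_sum]
  simp [Pi.single_apply, apply_ite, hj]

lemma add_eq_smul_of_cycleForm_eq {N j : ℕ} (hj : j + 2 < N) {v : ℕ → E}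
    (h : cycleForm N v = cos (π / N) * ∑ i ∈ range N, ‖v i‖ ^ 2) :
    v j + v (j + 2) = (2 * cos (π / N)) • v (j + 1) := by
  set c := cos (π / N)
  set w := (2 * c) • v (j + 1) - (v j + v (j + 2))
  have hc : c < 1 := by
    rw [← cos_zero]
    exact cos_lt_cos_of_nonneg_of_le_pi le_rfl (div_le_self pi_pos.le (Nat.one_le_cast.mpr
      (by omega))) (div_pos pi_pos (Nat.cast_pos.mpr (by omega)))
  have hle := cycleForm_le (N := N) (by omega) (v - Pi.single (j + 1) w)
  rw [cycleForm_sub_single hj, sum_norm_sq_sub_single (N := N) (by omega), h] at hle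
  have hw : ⟪w, w⟫_ℝ ≤ c * ‖w‖ ^ 2 := by
    simp only [w, inner_sub_left, real_inner_smul_left] at hle ⊢
    linarith
  rw [real_inner_self_eq_norm_sq] at hw
  have hw0 : w = 0 := by
    rw [← norm_eq_zero, ← sq_eq_zero_iff]
    nlinarith [sq_nonneg ‖w‖]
  exact (sub_eq_zero.mp hw0).symm

lemma sin_smul_eq_of_add_eq_smul {M : Type*} [AddCommGroup M] [Module ℝ M] {n : ℕ} {θ : ℝ}
    {u : ℕ → M} (hu : ∀ j, j + 2 < n → u j + u (j + 2) = (2 * cos θ) • u (j + 1)) :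
    ∀ j < n, sin θ • u j = sin (j * θ) • u 1 - sin ((j - 1) * θ) • u 0 := by
  intro j
  induction j using Nat.twoStepInduction with
  | zero => simp [← neg_smul]
  | one => simp
  | more j ih₀ ih₁ =>
    intro hj
    rw [eq_sub_of_add_eq' (hu j hj), smul_sub, smul_comm, ih₁ (by omega), ih₀ (by omega)]
    have e (a : ℝ) : sin ((a + 1) * θ) = 2 * cos θ * sin (a * θ) - sin ((a - 1) * θ) := by
      rw [add_mul, sub_mul, one_mul, sin_add, sin_sub]; ring
    push_cast
    rw [show (j : ℝ) + 2 = j + 1 + 1 by ring, show (j : ℝ) + 1 + 1 - 1 = j + 1 by ring, e (j + 1),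
      show (j : ℝ) + 1 - 1 = j by ring, e j]
    module

lemma inner_eq_cos_of_cycleForm_eq {N : ℕ} (hN : 3 ≤ N) {v : ℕ → E} (hv : ∀ j < N, ‖v j‖ = 1)
    (h : cycleForm N v = N * cos (π / N)) {i j : ℕ} (hi : i < N) (hj : j < N) :
    ⟪v i, v j⟫_ℝ = cos ((i - j) * (π / N)) := by
  set θ := π / N
  have hθ : 0 < θ := div_pos pi_pos (Nat.cast_pos.mpr (by omega))
  have hθ3 : θ ≤ π / 3 := div_le_div_of_nonneg_left pi_pos.le (by norm_num) (by exact_mod_cast hN)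
  have hsum : ∑ j ∈ range N, ‖v j‖ ^ 2 = N := by
    rw [sum_congr rfl fun j hj => by rw [hv j (mem_range.mp hj)]]
    simp
  have hrec (j : ℕ) (hj : j + 2 < N) : v j + v (j + 2) = (2 * cos θ) • v (j + 1) :=
    add_eq_smul_of_cycleForm_eq hj (by rw [h, hsum]; ring)
  have h01 : ⟪v 0, v 1⟫_ℝ = cos θ := by
    have hcos : 0 < cos θ := cos_pos_of_mem_Ioo ⟨by linarith, by linarith [pi_pos]⟩
    have h2 := congrArg (‖·‖ ^ 2) (eq_sub_of_add_eq' (hrec 0 (by omega)))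
    simp only [zero_add, norm_sub_sq_real, norm_smul, real_inner_smul_right, hv 0 (by omega),
      hv 1 (by omega), hv 2 (by omega), real_inner_comm (v 0), Real.norm_eq_abs,
      abs_of_pos (by positivity : 0 < 2 * cos θ)] at h2
    nlinarith
  have hsin : sin θ ≠ 0 := (sin_pos_of_pos_of_lt_pi hθ (by linarith [pi_pos])).ne'
  have hs := sin_smul_eq_of_add_eq_smul hrec
  apply mul_left_cancel₀ (pow_ne_zero 2 hsin)
  calc sin θ ^ 2 * ⟪v i, v j⟫_ℝ = ⟪sin θ • v i, sin θ • v j⟫_ℝ := by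
        rw [real_inner_smul_left, real_inner_smul_right]; ring
    _ = sin θ ^ 2 * cos ((i - j) * θ) := by
        rw [hs i hi, hs j hj]
        simp only [inner_sub_left, inner_sub_right, real_inner_smul_left, real_inner_smul_right,
          real_inner_self_eq_norm_sq, hv 0 (by omega), hv 1 (by omega), real_inner_comm (v 0), h01]
        simp only [sub_mul, one_mul, sin_sub, cos_sub]
        linear_combination -(sin (i * θ) * sin (j * θ)) * sin_sq_add_cos_sq θ

noncomputable def Fin.extendZero {N : ℕ} (v : Fin N → E) (i : ℕ) : E :=
  if h : i < N then v ⟨i, h⟩ else 0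

lemma entry_gram {N : ℕ} (v : Fin N → E) (i j : ℕ) :
    entry (Matrix.gram ℝ v) i j = ⟪Fin.extendZero v i, Fin.extendZero v j⟫_ℝ := by
  unfold entry Fin.extendZero
  split_ifs <;> simp_all [Matrix.gram_apply]

lemma cycObj_gram {N : ℕ} (v : Fin N → E) :
    cycObj N (Matrix.gram ℝ v) = cycleForm N (Fin.extendZero v) := by
  simp only [cycObj, cycleForm, entry_gram]

end CycleForm

lemma Matrix.PosSemidef.exists_eq_gram {𝕜 : Type*} [RCLike 𝕜] {n : Type*} [Fintype n]
    {A : Matrix n n 𝕜} (hA : A.PosSemidef) :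
    ∃ v : n → EuclideanSpace 𝕜 n, A = Matrix.gram 𝕜 v := by
  classical
  open scoped MatrixOrder in
  obtain ⟨B, rfl⟩ := CStarAlgebra.nonneg_iff_eq_star_mul_self.mp hA.nonneg
  refine ⟨fun j => WithLp.toLp 2 fun r => B r j, ?_⟩
  ext i j
  simp [Matrix.gram_apply, Matrix.mul_apply, PiLp.inner_apply, mul_comm]

noncomputable def cycleOptimizer (N : ℕ) : Matrix (Fin N) (Fin N) ℝ :=
  Matrix.of fun i j => cos ((i - j : ℝ) * (π / N))

lemma cycleOptimizer_eq_gram (N : ℕ) : cycleOptimizer N =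
    Matrix.gram ℝ fun j : Fin N => Complex.exp ((j * (π / N) : ℝ) * Complex.I) := by
  ext i j
  simp only [cycleOptimizer, Matrix.of_apply, Matrix.gram_apply, Complex.inner, Complex.mul_re,
    Complex.conj_re, Complex.conj_im, Complex.exp_ofReal_mul_I_re, Complex.exp_ofReal_mul_I_im]
  rw [sub_mul, cos_sub]
  ring

lemma cycObj_cycleOptimizer {N : ℕ} (hN : 0 < N) :
    cycObj N (cycleOptimizer N) = N * cos (π / N) := by
  have hstep : ∀ i ∈ range (N - 1), entry (cycleOptimizer N) i (i + 1) = cos (π / N) := by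
    intro i hi
    rw [mem_range] at hi
    simp [entry, cycleOptimizer, dif_pos (show i < N ∧ i + 1 < N by omega)]
  have hwrap : entry (cycleOptimizer N) (N - 1) 0 = -cos (π / N) := by
    simp [entry, cycleOptimizer, dif_pos (show N - 1 < N ∧ 0 < N by omega), Nat.cast_sub hN]
    rw [sub_mul, one_mul, mul_div_cancel₀ _ (by positivity), cos_pi_sub]
  rw [cycObj, sum_congr rfl hstep, hwrap, sum_const, card_range, nsmul_eq_mul, Nat.cast_sub hN]
  ring

theorem cycle_sdp_unique_optimizer (N : ℕ) (hN : 3 ≤ N) :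
    ∃! X : Matrix (Fin N) (Fin N) ℝ,
      X.PosSemidef ∧ (∀ i, X i i = 1) ∧
        cycObj N X = (N : ℝ) * Real.cos (Real.pi / N) := by
  refine ⟨cycleOptimizer N, ⟨?_, fun i => by simp [cycleOptimizer],
    cycObj_cycleOptimizer (by omega)⟩, ?_⟩
  · rw [cycleOptimizer_eq_gram]
    exact Matrix.posSemidef_gram ℝ _
  rintro X ⟨hX, hdiag, hobj⟩
  obtain ⟨v, rfl⟩ := hX.exists_eq_gram
  have hv (j : ℕ) (hj : j < N) : ‖Fin.extendZero v j‖ = 1 := by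
    have h := hdiag ⟨j, hj⟩
    rw [Matrix.gram_apply, real_inner_self_eq_norm_sq, pow_eq_one_iff_of_nonneg (norm_nonneg _)
      two_ne_zero] at h
    simpa [Fin.extendZero, hj] using h
  rw [cycObj_gram] at hobj
  ext i j
  have := inner_eq_cos_of_cycleForm_eq hN hv hobj i.isLt j.isLt
  simpa [Fin.extendZero, cycleOptimizer, Matrix.gram_apply] using this
end

section
/- The 4×4 matrix R = (1/4)·Σ_{i=0}^{3} ⟨σ_i, σ_i⟩ σ_i ⊗ σ_i with ⟨σ_i,σ_i⟩ = 1 for i = 1,2,3 together with the additional nonzero terms ⟨I,I⟩ = ⟨Z,I⟩ = ⟨I,Z⟩ = 1, i.e. R = (1/4)(I⊗I + X⊗X + Y⊗Y + Z⊗Z + Z⊗I + I⊗Z), has eigenvalues 0, 1, 1/2, and −1/2; in particular R is Hermitian with trace 1 but not positive semidefinite. -/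
open Matrix ComplexOrder

open Kronecker

noncomputable def σx : Matrix (Fin 2) (Fin 2) ℂ := !![0, 1; 1, 0]
noncomputable def σy : Matrix (Fin 2) (Fin 2) ℂ := !![0, -Complex.I; Complex.I, 0]
noncomputable def σz : Matrix (Fin 2) (Fin 2) ℂ := !![1, 0; 0, -1]

/-- The pseudo-density matrix R = (1/4)(I⊗I + X⊗X + Y⊗Y + Z⊗Z + Z⊗I + I⊗Z). -/
noncomputable def Rex : Matrix (Fin 2 × Fin 2) (Fin 2 × Fin 2) ℂ :=
  (1 / 4 : ℂ) • (1 + σx ⊗ₖ σx + σy ⊗ₖ σy + σz ⊗ₖ σz + σz ⊗ₖ 1 + 1 ⊗ₖ σz)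

/-!
The Pauli matrices are Hermitian and traceless, which gives Hermiticity and `tr R = 1` at once.
For the spectrum, `(I⊗I + X⊗X + Y⊗Y + Z⊗Z)/4` is half the swap and `(Z⊗I + I⊗Z)/4` is
`diag(1/2, 0, 0, -1/2)`, so in the computational basis `R` splits into the blocks `1`, `0` and
`[[0, 1/2], [1/2, 0]]`, whose eigenvalues are `1`, `0` and `±1/2`. The eigenvalue `-1/2`
(of the singlet `|01⟩ - |10⟩`) shows that `R` is not positive semidefinite.
-/

theorem Matrix.IsHermitian.kronecker {R m n : Type*} [CommRing R] [StarRing R]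
    {A : Matrix m m R} {B : Matrix n n R} (hA : A.IsHermitian) (hB : B.IsHermitian) :
    (A ⊗ₖ B).IsHermitian := by
  rw [IsHermitian, conjTranspose_kronecker, hA.eq, hB.eq]

lemma isHermitian_σx : σx.IsHermitian := by
  ext i j; fin_cases i <;> fin_cases j <;> simp [σx]

lemma isHermitian_σy : σy.IsHermitian := by
  ext i j; fin_cases i <;> fin_cases j <;> simp [σy]

lemma isHermitian_σz : σz.IsHermitian := by
  ext i j; fin_cases i <;> fin_cases j <;> simp [σz]

lemma isHermitian_Rex : Rex.IsHermitian := by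
  have hI : (1 : Matrix (Fin 2) (Fin 2) ℂ).IsHermitian := isHermitian_one
  have hX := isHermitian_σx
  have hY := isHermitian_σy
  have hZ := isHermitian_σz
  refine IsHermitian.smul ?_ (by simp [IsSelfAdjoint])
  exact ((((isHermitian_one.add (hX.kronecker hX)).add (hY.kronecker hY)).add
    (hZ.kronecker hZ)).add (hZ.kronecker hI)).add (hI.kronecker hZ)

lemma trace_Rex : Rex.trace = 1 := by
  simp [Rex, trace_kronecker, σx, σy, σz, trace_fin_two]

/-- `Rex` in the basis `|00⟩, |01⟩, |10⟩, |11⟩`. -/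
noncomputable def RexFin4 : Matrix (Fin 4) (Fin 4) ℂ :=
  !![1, 0, 0, 0; 0, 0, 1 / 2, 0; 0, 1 / 2, 0, 0; 0, 0, 0, 0]

lemma Rex_eq_reindex : Rex = reindex finProdFinEquiv.symm finProdFinEquiv.symm RexFin4 := by
  ext ⟨i, j⟩ ⟨k, l⟩
  fin_cases i <;> fin_cases j <;> fin_cases k <;> fin_cases l <;>
    simp [Rex, RexFin4, σx, σy, σz, one_apply, finProdFinEquiv] <;> norm_num

lemma det_scalar_sub_RexFin4 (x : ℂ) :
    (scalar (Fin 4) x - RexFin4).det = (x - 1) * x * (x - 1 / 2) * (x + 1 / 2) := by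
  simp [RexFin4, det_succ_row_zero, Fin.sum_univ_succ]
  ring

lemma spectrum_Rex : spectrum ℂ Rex = {0, 1, 1 / 2, -(1 / 2)} := by
  ext x
  rw [Rex_eq_reindex, mem_spectrum_iff_isRoot_charpoly, charpoly_reindex, Polynomial.IsRoot,
    eval_charpoly, det_scalar_sub_RexFin4]
  simp only [mul_eq_zero, sub_eq_zero, add_eq_zero_iff_eq_neg, Set.mem_insert_iff,
    Set.mem_singleton_iff]
  tauto

theorem pdm_example :
    Rex.IsHermitian ∧ Rex.trace = 1 ∧
      spectrum ℂ Rex = {0, 1, 1 / 2, -(1 / 2)} ∧ ¬ Rex.PosSemidef := by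
  refine ⟨isHermitian_Rex, trace_Rex, spectrum_Rex, fun hR => ?_⟩
  have hneg : -(1 / 2 : ℂ) ∈ spectrum ℂ Rex := by simp [spectrum_Rex]
  have := (posSemidef_iff_isHermitian_and_spectrum_nonneg.mp hR).2 hneg
  norm_num [Complex.le_def] at this
end

section
/- Let ρ_A be a 2×2 density matrix, ℰ a completely positive trace-preserving map on 2×2 matrices with Kraus operators {V_k}, and define the pseudo-density matrix R_AB = (1/4)·Σ_{i=0}^{3} {ρ_A, σ_i} ⊗ ℰ(σ_i), where {·,·} is the anticommutator. Then for all 2×2 Hermitian matrices A_m, A_n: Tr[(A_m ⊗ A_n) R_AB] = (1/2)·Tr[(A_m ρ_A + ρ_A A_m) ℰ†(A_n)], where ℰ†(A) = Σ_k V_k† A V_k. -/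
open Matrix ComplexOrder

open Kronecker

noncomputable def pauli : Fin 4 → Matrix (Fin 2) (Fin 2) ℂ
  | 0 => 1
  | 1 => !![0, 1; 1, 0]
  | 2 => !![0, -Complex.I; Complex.I, 0]
  | 3 => !![1, 0; 0, -1]

/-- Completeness of the Pauli basis: ∑ᵢ Tr[Bσᵢ]·Tr[Cσᵢ] = 2·Tr[BC]. -/
lemma pauli_complete (B C : Matrix (Fin 2) (Fin 2) ℂ) :
    ∑ i : Fin 4, (B * pauli i).trace * (C * pauli i).trace = 2 * (B * C).trace := by
  simp only [Fin.sum_univ_four, pauli, Matrix.trace, Matrix.diag_apply, Matrix.mul_apply,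
    Fin.sum_univ_two, Matrix.one_apply, Matrix.cons_val', Matrix.cons_val_zero,
    Matrix.cons_val_one, Matrix.head_cons, Matrix.empty_val', Matrix.cons_val_fin_one,
    Matrix.head_fin_const]
  norm_num
  linear_combination (B 0 1 * C 0 1 - B 0 1 * C 1 0 - B 1 0 * C 0 1 + B 1 0 * C 1 0) *
    Complex.I_sq

/-- Tr[(A_m ⊗ A_n) R_AB] = (1/2)·Tr[(A_m ρ_A + ρ_A A_m) ℰ†(A_n)] for the pseudo-density
    matrix R_AB = (1/4)·Σ_i {ρ_A, σ_i} ⊗ ℰ(σ_i) of a channel ℰ with Kraus operators V_k. -/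
theorem pdm_seq_correlation {ι : Type*} [Fintype ι]
    (ρA : Matrix (Fin 2) (Fin 2) ℂ) (hρ : ρA.PosSemidef) (htr : ρA.trace = 1)
    (V : ι → Matrix (Fin 2) (Fin 2) ℂ) (hTP : ∑ k, (V k)ᴴ * V k = 1)
    (Am An : Matrix (Fin 2) (Fin 2) ℂ) (hm : Am.IsHermitian) (hn : An.IsHermitian) :
    ((Am ⊗ₖ An) *
        ((1 / 4 : ℂ) • ∑ i : Fin 4,
          (ρA * pauli i + pauli i * ρA) ⊗ₖ (∑ k, V k * pauli i * (V k)ᴴ))).trace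
      = (1 / 2 : ℂ) * ((Am * ρA + ρA * Am) * (∑ k, (V k)ᴴ * An * V k)).trace := by
  have h1 : ∀ i : Fin 4, (Am * (ρA * pauli i + pauli i * ρA)).trace
      = ((Am * ρA + ρA * Am) * pauli i).trace := by
    intro i
    rw [mul_add, add_mul, Matrix.trace_add, Matrix.trace_add, ← mul_assoc]
    congr 1
    rw [← mul_assoc, Matrix.trace_mul_comm (Am * pauli i) ρA, ← mul_assoc]
  have h2 : ∀ i : Fin 4, (An * ∑ k, V k * pauli i * (V k)ᴴ).trace
      = ((∑ k, (V k)ᴴ * An * V k) * pauli i).trace := by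
    intro i
    rw [Matrix.mul_sum, Matrix.trace_sum, Finset.sum_mul, Matrix.trace_sum]
    refine Finset.sum_congr rfl fun k _ => ?_
    rw [Matrix.trace_mul_comm An (V k * pauli i * (V k)ᴴ)]
    rw [mul_assoc (V k * pauli i), Matrix.trace_mul_comm (V k * pauli i) ((V k)ᴴ * An),
      ← mul_assoc]
  calc ((Am ⊗ₖ An) *
        ((1 / 4 : ℂ) • ∑ i : Fin 4,
          (ρA * pauli i + pauli i * ρA) ⊗ₖ (∑ k, V k * pauli i * (V k)ᴴ))).trace
      = (1 / 4 : ℂ) * ∑ i : Fin 4,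
          (Am * (ρA * pauli i + pauli i * ρA)).trace *
            (An * ∑ k, V k * pauli i * (V k)ᴴ).trace := by
        rw [mul_smul_comm, Matrix.trace_smul, smul_eq_mul, Matrix.mul_sum, Matrix.trace_sum]
        congr 1
        refine Finset.sum_congr rfl fun i _ => ?_
        rw [← Matrix.mul_kronecker_mul, Matrix.trace_kronecker]
    _ = (1 / 4 : ℂ) * ∑ i : Fin 4,
          ((Am * ρA + ρA * Am) * pauli i).trace *
            ((∑ k, (V k)ᴴ * An * V k) * pauli i).trace := by
        congr 1
        exact Finset.sum_congr rfl fun i _ => by rw [h1 i, h2 i]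
    _ = (1 / 2 : ℂ) * ((Am * ρA + ρA * Am) * (∑ k, (V k)ᴴ * An * V k)).trace := by
        rw [pauli_complete]; ring
end

section
/- Let ρ_A be a 2×2 density matrix, ℰ a quantum channel on qubits, and R_AB = (1/4)·Σ_{i=0}^{3} {ρ_A, σ_i} ⊗ ℰ(σ_i). Then for Pauli observables σ_k (1 ≤ k ≤ 3) and σ_l (1 ≤ l ≤ 3): Tr[(σ_k ⊗ σ_l) R_AB] = (1/2)[Tr(ρ_A σ_k)·Tr(σ_l ℰ(I)) + Tr(σ_l ℰ(σ_k))]. -/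
open Matrix ComplexOrder

open Kronecker

theorem pdm_pauli_correlation {ι : Type*} [Fintype ι]
    (ρA : Matrix (Fin 2) (Fin 2) ℂ) (hρ : ρA.PosSemidef) (htr : ρA.trace = 1)
    (V : ι → Matrix (Fin 2) (Fin 2) ℂ) (hTP : ∑ j, (V j)ᴴ * V j = 1)
    (k l : Fin 4) (hk : k ≠ 0) (hl : l ≠ 0) :
    ((pauli k ⊗ₖ pauli l) *
        ((1 / 4 : ℂ) • ∑ i : Fin 4,
          (ρA * pauli i + pauli i * ρA) ⊗ₖ (∑ j, V j * pauli i * (V j)ᴴ))).trace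
      = (1 / 2 : ℂ) * ((ρA * pauli k).trace * (pauli l * (∑ j, V j * 1 * (V j)ᴴ)).trace
          + (pauli l * (∑ j, V j * pauli k * (V j)ᴴ)).trace) := by
  have hE1 : (∑ j, V j * 1 * (V j)ᴴ) = ∑ j, V j * pauli 0 * (V j)ᴴ := by rfl
  rw [hE1, Matrix.mul_smul, Matrix.trace_smul, Matrix.mul_sum, Matrix.trace_sum]
  simp only [← Matrix.mul_kronecker_mul, Matrix.trace_kronecker]
  rw [Fin.sum_univ_four]
  have htr' : ρA 0 0 + ρA 1 1 = 1 := by rwa [Matrix.trace_fin_two] at htr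
  have hcase : k = 1 ∨ k = 2 ∨ k = 3 := by fin_cases k <;> simp_all
  have hp0 : pauli 0 = 1 := rfl
  have hp1 : pauli 1 = !![0, 1; 1, 0] := rfl
  have hp2 : pauli 2 = !![0, -Complex.I; Complex.I, 0] := rfl
  have hp3 : pauli 3 = !![1, 0; 0, -1] := rfl
  rcases hcase with rfl | rfl | rfl <;>
  · set t0 := (pauli l * ∑ j, V j * pauli 0 * (V j)ᴴ).trace with h0
    set t1 := (pauli l * ∑ j, V j * pauli 1 * (V j)ᴴ).trace with h1
    set t2 := (pauli l * ∑ j, V j * pauli 2 * (V j)ᴴ).trace with h2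
    set t3 := (pauli l * ∑ j, V j * pauli 3 * (V j)ᴴ).trace with h3
    simp only [hp0, hp1, hp2, hp3, Matrix.trace_fin_two, Matrix.mul_apply,
      Matrix.add_apply, Fin.sum_univ_two, Matrix.cons_val', Matrix.cons_val_zero,
      Matrix.cons_val_one, Matrix.head_cons, Matrix.head_fin_const, Matrix.one_apply,
      smul_eq_mul]
    norm_num
    first
    | linear_combination ((1/2) * t1) * htr'
    | linear_combination ((1/2) * t2) * htr' + (-(1/2) * (ρA 0 0 + ρA 1 1) * t2) * Complex.I_sq
    | linear_combination ((1/2) * t3) * htr'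
end

section
/- For any unit vectors x_1, …, x_N (N ≥ 3) in a real inner product space, Σ_{i=1}^{N−1} ⟨x_i, x_{i+1}⟩ − ⟨x_N, x_1⟩ ≤ N·cos(π/N). -/
open RealInnerProductSpace

open Real Finset InnerProductGeometry

/-!
Put `x_N := -x_0`, so that the left-hand side is `∑_{i<N} ⟪x_i, x_{i+1}⟫ = ∑ cos θ_i` with
`θ_i` the angle between `x_i` and `x_{i+1}`. The triangle inequality for angles gives
`π = ∠(x_0, x_N) ≤ ∑ θ_i`. Shrinking the `θ_i` by a common factor only increases their cosines
and makes `∑ θ_i = π`; then every angle except the largest is at most `π/2`, and the largest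
one, paired with any other, obeys `cos A + cos B ≤ 2 cos ((A + B) / 2)`. So the cosines are
bounded, one by one and for that pair jointly, by the tangent line of `cos` at `π/N`, whose
values at the `θ_i` sum to `N cos (π/N)` because `∑ θ_i = π`.
-/

theorem ConcaveOn.le_add_mul_sub_of_hasDerivAt {S : Set ℝ} {f : ℝ → ℝ} {f' a x : ℝ}
    (hf : ConcaveOn ℝ S f) (ha : a ∈ S) (hx : x ∈ S) (hf' : HasDerivAt f f' a) :
    f x ≤ f a + f' * (x - a) := by
  rcases lt_trichotomy x a with hxa | rfl | hax
  · have h := hf.le_slope_of_hasDerivAt hx ha hxa hf'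
    rw [slope_def_field, le_div_iff₀ (sub_pos.2 hxa)] at h
    linarith
  · simp
  · have h := hf.slope_le_of_hasDerivAt ha hx hax hf'
    rw [slope_def_field, div_le_iff₀ (sub_pos.2 hax)] at h
    linarith

namespace Real

theorem cos_le_cos_sub_sin_mul_sub {a x : ℝ} (ha : a ∈ Set.Icc (-(π / 2)) (π / 2))
    (hx : x ∈ Set.Icc (-(π / 2)) (π / 2)) : cos x ≤ cos a - sin a * (x - a) := by
  have h := strictConcaveOn_cos_Icc.concaveOn.le_add_mul_sub_of_hasDerivAt ha hx
    (hasDerivAt_cos a)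
  linarith

theorem cos_add_cos_le_two_mul_cos_half {x y : ℝ} (h₀ : -π ≤ x + y) (hπ : x + y ≤ π) :
    cos x + cos y ≤ 2 * cos ((x + y) / 2) := by
  have hcos : 0 ≤ cos ((x + y) / 2) := cos_nonneg_of_mem_Icc ⟨by linarith, by linarith⟩
  rw [cos_add_cos]
  nlinarith [cos_le_one ((x - y) / 2)]

end Real

namespace Finset

variable {ι : Type*} {s : Finset ι} {θ : ι → ℝ}

theorem sum_cos_le_card_mul_cos_of_sum_eq_pi (hs : 1 < #s) (h₀ : ∀ i ∈ s, 0 ≤ θ i)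
    (hsum : ∑ i ∈ s, θ i = π) : ∑ i ∈ s, cos (θ i) ≤ #s * cos (π / #s) := by
  classical
  set a := π / #s
  have hcard : (2 : ℝ) ≤ #s := by exact_mod_cast hs
  have ha_mem : a ∈ Set.Icc (-(π / 2)) (π / 2) :=
    ⟨by linarith [pi_pos, (div_nonneg pi_pos.le (Nat.cast_nonneg _) : 0 ≤ a)],
      div_le_div_of_nonneg_left pi_pos.le two_pos hcard⟩
  set L : ℝ → ℝ := fun t => cos a - sin a * (t - a) with hL
  have hcos_le_L : ∀ t ∈ Set.Icc 0 (π / 2), cos t ≤ L t := fun t ht =>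
    cos_le_cos_sub_sin_mul_sub ha_mem ⟨by linarith [ht.1, pi_pos], ht.2⟩
  obtain ⟨j, hj, hj_max⟩ := s.exists_max_image θ (card_pos.1 (by omega))
  obtain ⟨k, hk, hkj⟩ := (one_lt_card_iff_nontrivial.1 hs).exists_ne j
  have hpair : ∀ i ∈ s, i ≠ j → θ i + θ j ≤ π := fun i hi hij => by
    rw [← hsum, ← sum_pair hij]
    exact sum_le_sum_of_subset_of_nonneg (by simp [insert_subset_iff, hi, hj])
      fun i hi _ => h₀ i hi
  have hsmall : ∀ i ∈ s, i ≠ j → θ i ≤ π / 2 := fun i hi hij => by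
    linarith [hpair i hi hij, hj_max i hi]
  have hsplit : ∀ f : ι → ℝ, ∑ i ∈ s, f i = f k + f j + ∑ i ∈ (s.erase j).erase k, f i :=
    fun f => by
      rw [add_comm (f k), add_assoc, add_sum_erase _ _ (mem_erase.2 ⟨hkj, hk⟩),
        add_sum_erase _ _ hj]
  have hpair_le_L : cos (θ k) + cos (θ j) ≤ L (θ k) + L (θ j) := by
    have hmid := hcos_le_L ((θ k + θ j) / 2)
      ⟨by linarith [h₀ k hk, h₀ j hj], by linarith [hpair k hk hkj]⟩
    have := cos_add_cos_le_two_mul_cos_half (by linarith [h₀ k hk, h₀ j hj, pi_pos])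
      (hpair k hk hkj)
    simp only [hL] at hmid ⊢
    linarith
  calc ∑ i ∈ s, cos (θ i)
      = cos (θ k) + cos (θ j) + ∑ i ∈ (s.erase j).erase k, cos (θ i) :=
        hsplit fun i => cos (θ i)
    _ ≤ L (θ k) + L (θ j) + ∑ i ∈ (s.erase j).erase k, L (θ i) := by
      gcongr with i hi
      obtain ⟨hik, hij, hi⟩ : i ≠ k ∧ i ≠ j ∧ i ∈ s := by simpa using hi
      exact hcos_le_L _ ⟨h₀ i hi, hsmall i hi hij⟩
    _ = ∑ i ∈ s, L (θ i) := (hsplit fun i => L (θ i)).symm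
    _ = #s * cos a := by
      have hsa : (#s : ℝ) * a = π := mul_div_cancel₀ _ (by linarith)
      simp only [hL, sum_sub_distrib, ← mul_sum, sum_const, nsmul_eq_mul, hsum, hsa]
      ring

theorem sum_cos_le_card_mul_cos_of_pi_le_sum (hs : 1 < #s)
    (hθ : ∀ i ∈ s, θ i ∈ Set.Icc 0 π) (hsum : π ≤ ∑ i ∈ s, θ i) :
    ∑ i ∈ s, cos (θ i) ≤ #s * cos (π / #s) := by
  set S := ∑ i ∈ s, θ i
  have hS : 0 < S := pi_pos.trans_le hsum
  have hc : π / S ≤ 1 := (div_le_one hS).2 hsum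
  calc ∑ i ∈ s, cos (θ i) ≤ ∑ i ∈ s, cos (π / S * θ i) := sum_le_sum fun i hi =>
        cos_le_cos_of_nonneg_of_le_pi (mul_nonneg (by positivity) (hθ i hi).1) (hθ i hi).2
          (mul_le_of_le_one_left (hθ i hi).1 hc)
    _ ≤ #s * cos (π / #s) := sum_cos_le_card_mul_cos_of_sum_eq_pi hs
        (fun i hi => mul_nonneg (by positivity) (hθ i hi).1)
        (by rw [← mul_sum, div_mul_cancel₀ _ hS.ne'])

end Finset

namespace InnerProductGeometry

variable {V : Type*} [NormedAddCommGroup V] [InnerProductSpace ℝ V]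

theorem angle_le_sum_angle_succ (x : ℕ → V) (hx₀ : x 0 ≠ 0) (n : ℕ) :
    angle (x 0) (x n) ≤ ∑ i ∈ range n, angle (x i) (x (i + 1)) := by
  induction n with
  | zero => simp [angle_self hx₀]
  | succ n ih =>
    rw [sum_range_succ]
    linarith [angle_le_angle_add_angle (x 0) (x n) (x (n + 1))]

theorem sum_inner_succ_le_mul_cos_pi_div (N : ℕ) (hN : 2 ≤ N) (y : ℕ → V)
    (hy : ∀ i ≤ N, ‖y i‖ = 1) (hyN : y N = -y 0) :
    ∑ i ∈ range N, ⟪y i, y (i + 1)⟫ ≤ N * cos (π / N) := by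
  have hy₀ : y 0 ≠ 0 := norm_ne_zero_iff.1 (by simp [hy 0 (Nat.zero_le N)])
  have hinner : ∀ i ∈ range N, ⟪y i, y (i + 1)⟫ = cos (angle (y i) (y (i + 1))) := by
    intro i hi
    rw [mem_range] at hi
    rw [cos_angle, hy i hi.le, hy (i + 1) hi, mul_one, div_one]
  have hangle : π ≤ ∑ i ∈ range N, angle (y i) (y (i + 1)) := by
    calc π = angle (y 0) (y N) := by rw [hyN, angle_self_neg_of_nonzero hy₀]
      _ ≤ _ := angle_le_sum_angle_succ y hy₀ N
  rw [sum_congr rfl hinner]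
  simpa using sum_cos_le_card_mul_cos_of_pi_le_sum (s := range N) (by rw [card_range]; omega)
    (fun i _ => ⟨angle_nonneg _ _, angle_le_pi _ _⟩) hangle

end InnerProductGeometry

theorem ncycle_vector_bound {E : Type*} [NormedAddCommGroup E] [InnerProductSpace ℝ E]
    (N : ℕ) (hN : 3 ≤ N) (x : ℕ → E) (hx : ∀ i < N, ‖x i‖ = 1) :
    (∑ i ∈ Finset.range (N - 1), ⟪x i, x (i + 1)⟫) - ⟪x (N - 1), x 0⟫
      ≤ (N : ℝ) * Real.cos (Real.pi / N) := by
  obtain ⟨M, rfl⟩ : ∃ M, N = M + 1 := ⟨N - 1, by omega⟩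
  set y := Function.update x (M + 1) (-x 0)
  have hyx : ∀ i ≤ M, y i = x i := fun i hi => Function.update_of_ne (by omega) _ _
  have hy : ∀ i ≤ M + 1, ‖y i‖ = 1 := fun i hi => by
    rcases Nat.lt_or_eq_of_le hi with hi | rfl
    · rw [hyx i (by omega), hx i hi]
    · simp [y, hx 0 (by omega)]
  have hyN : y (M + 1) = -y 0 := by simp [y]
  have hsum : ∑ i ∈ range M, ⟪y i, y (i + 1)⟫ = ∑ i ∈ range M, ⟪x i, x (i + 1)⟫ :=
    sum_congr rfl fun i hi => by
      rw [mem_range] at hi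
      rw [hyx i hi.le, hyx (i + 1) hi]
  calc (∑ i ∈ range (M + 1 - 1), ⟪x i, x (i + 1)⟫) - ⟪x (M + 1 - 1), x 0⟫
      = ∑ i ∈ range (M + 1), ⟪y i, y (i + 1)⟫ := by
        rw [sum_range_succ, hsum, hyN, hyx M le_rfl, hyx 0 (Nat.zero_le M), inner_neg_right,
          Nat.add_sub_cancel, sub_eq_add_neg]
    _ ≤ _ := sum_inner_succ_le_mul_cos_pi_div (M + 1) (by omega) y hy hyN
end

section
/- Let ρ_A be a 2×2 density matrix, ℰ a qubit channel with Kraus operators {K_j}, U an arbitrary 2×2 unitary and V ∈ {X, Y, Z}. Define the transformed channel ℰ̃ with Kraus operators {U K_j V†}. Then for all 2×2 Hermitian A_m, A_n: (1/4)Σ_{i=0}^{3} Tr[A_m {ρ_A, σ_i}]·Tr[A_n ℰ(σ_i)] = (1/4)Σ_{i=0}^{3} Tr[(V A_m V†){V ρ_A V†, σ_i}]·Tr[(U A_n U†) ℰ̃(σ_i)]. -/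
open Matrix ComplexOrder

lemma term_eq {ι : Type*} [Fintype ι]
    (ρA Am An U V σ : Matrix (Fin 2) (Fin 2) ℂ) (K : ι → Matrix (Fin 2) (Fin 2) ℂ)
    (hU : Uᴴ * U = 1) (hVh : Vᴴ = V) (hVV : V * V = 1)
    (s : ℂ) (hσ : V * σ * V = s • σ) (hss : s * s = 1) :
    (Am * (ρA * σ + σ * ρA)).trace * (An * (∑ j, K j * σ * (K j)ᴴ)).trace
    = ((V * Am * Vᴴ) * ((V * ρA * Vᴴ) * σ + σ * (V * ρA * Vᴴ))).trace
      * ((U * An * Uᴴ) * (∑ j, (U * K j * Vᴴ) * σ * (U * K j * Vᴴ)ᴴ)).trace := by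
  rw [hVh]
  -- second factor
  have h2 : ((U * An * Uᴴ) * (∑ j, (U * K j * V) * σ * (U * K j * V)ᴴ)).trace
      = s * (An * (∑ j, K j * σ * (K j)ᴴ)).trace := by
    have hj : ∀ j, (U * K j * V) * σ * (U * K j * V)ᴴ
        = s • (U * ((K j) * σ * (K j)ᴴ) * Uᴴ) := by
      intro j
      have h1 : (U * K j * V) * σ * (U * K j * V)ᴴ
          = U * K j * (V * σ * V) * ((K j)ᴴ * Uᴴ) := by
        simp only [conjTranspose_mul, hVh]
        noncomm_ring
      rw [h1, hσ]
      simp only [Matrix.mul_smul, Matrix.smul_mul]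
      congr 1
      noncomm_ring
    rw [Finset.sum_congr rfl (fun j _ => hj j), ← Finset.smul_sum,
      show (∑ x, U * (K x * σ * (K x)ᴴ) * Uᴴ) = U * (∑ j, K j * σ * (K j)ᴴ) * Uᴴ from by
        rw [Finset.mul_sum, Finset.sum_mul]]
    have key : (U * An * Uᴴ) * (U * (∑ j, K j * σ * (K j)ᴴ) * Uᴴ)
        = U * (An * (∑ j, K j * σ * (K j)ᴴ)) * Uᴴ := by
      calc (U * An * Uᴴ) * (U * (∑ j, K j * σ * (K j)ᴴ) * Uᴴ)
          = U * An * (Uᴴ * U) * (∑ j, K j * σ * (K j)ᴴ) * Uᴴ := by noncomm_ring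
        _ = U * (An * (∑ j, K j * σ * (K j)ᴴ)) * Uᴴ := by rw [hU]; noncomm_ring
    rw [Matrix.mul_smul, Matrix.trace_smul, key, Matrix.trace_mul_cycle,
      ← Matrix.mul_assoc, hU, Matrix.one_mul]
    simp
  -- first factor
  have h3 : ((V * Am * V) * ((V * ρA * V) * σ + σ * (V * ρA * V))).trace
      = s * (Am * (ρA * σ + σ * ρA)).trace := by
    have e1 : (V * Am * V) * ((V * ρA * V) * σ) = V * (Am * ρA) * (V * σ) := by
      calc (V * Am * V) * ((V * ρA * V) * σ)
          = V * Am * (V * V) * ρA * (V * σ) := by noncomm_ring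
        _ = V * (Am * ρA) * (V * σ) := by rw [hVV]; noncomm_ring
    have e2 : (V * Am * V) * (σ * (V * ρA * V)) = (V * Am) * (V * σ * V) * (ρA * V) := by
      noncomm_ring
    rw [Matrix.mul_add, Matrix.trace_add, e1, e2, hσ]
    have t1 : (V * (Am * ρA) * (V * σ)).trace = s * (Am * (ρA * σ)).trace := by
      rw [Matrix.trace_mul_cycle,
        show V * σ * V * (Am * ρA) = (s • σ) * (Am * ρA) from by rw [hσ],
        Matrix.smul_mul, Matrix.trace_smul, Matrix.trace_mul_comm, Matrix.mul_assoc]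
      simp
    have t2 : ((V * Am) * (s • σ) * (ρA * V)).trace = s * (Am * (σ * ρA)).trace := by
      rw [Matrix.mul_smul, Matrix.smul_mul, Matrix.trace_smul]
      rw [Matrix.trace_mul_cycle,
        show ρA * V * (V * Am) * σ = ρA * (V * V) * Am * σ from by noncomm_ring, hVV,
        Matrix.mul_one, Matrix.trace_mul_cycle, Matrix.trace_mul_comm]
      simp [Matrix.mul_assoc]
    rw [t1, t2, Matrix.mul_add, Matrix.trace_add]
    ring
  rw [h2, h3]
  linear_combination (-( (Am * (ρA * σ + σ * ρA)).trace
    * (An * (∑ j, K j * σ * (K j)ᴴ)).trace)) * hss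

/-- Invariance of the sequential correlation under the 'local isometry in time'
    (V ∈ {X,Y,Z} at time t_A, arbitrary unitary U at time t_B), where the channel's Kraus
    operators K_j are transformed to U K_j V†. -/
theorem local_isometry_in_time {ι : Type*} [Fintype ι]
    (ρA : Matrix (Fin 2) (Fin 2) ℂ) (hρ : ρA.PosSemidef) (htr : ρA.trace = 1)
    (K : ι → Matrix (Fin 2) (Fin 2) ℂ) (hTP : ∑ j, (K j)ᴴ * K j = 1)
    (U : Matrix (Fin 2) (Fin 2) ℂ) (hU : Uᴴ * U = 1)
    (V : Matrix (Fin 2) (Fin 2) ℂ) (hV : V = pauli 1 ∨ V = pauli 2 ∨ V = pauli 3)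
    (Am An : Matrix (Fin 2) (Fin 2) ℂ) (hm : Am.IsHermitian) (hn : An.IsHermitian) :
    (1 / 4 : ℂ) * ∑ i : Fin 4,
        (Am * (ρA * pauli i + pauli i * ρA)).trace
          * (An * (∑ j, K j * pauli i * (K j)ᴴ)).trace
      = (1 / 4 : ℂ) * ∑ i : Fin 4,
          ((V * Am * Vᴴ) * ((V * ρA * Vᴴ) * pauli i + pauli i * (V * ρA * Vᴴ))).trace
            * ((U * An * Uᴴ) * (∑ j, (U * K j * Vᴴ) * pauli i * (U * K j * Vᴴ)ᴴ)).trace := by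
  congr 1
  apply Finset.sum_congr rfl
  intro i _
  have hVh : Vᴴ = V := by
    rcases hV with h | h | h <;> subst h <;>
      · ext a b; fin_cases a <;> fin_cases b <;>
          simp [pauli, Matrix.conjTranspose_apply, Complex.ext_iff]
  have hVV : V * V = 1 := by
    rcases hV with h | h | h <;> subst h <;>
      · ext a b; fin_cases a <;> fin_cases b <;>
          simp [pauli, Matrix.mul_apply, Fin.sum_univ_two, Matrix.one_apply]
  obtain ⟨s, hσ, hss⟩ : ∃ s : ℂ, V * pauli i * V = s • pauli i ∧ s * s = 1 := by
    rcases hV with h | h | h <;> subst h <;> fin_cases i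
    all_goals first
      | (refine ⟨1, ?_, by ring⟩;
         ext a b; fin_cases a <;> fin_cases b <;>
           simp [pauli, Matrix.mul_apply, Fin.sum_univ_two, Matrix.one_apply,
             Complex.ext_iff];
         done)
      | (refine ⟨-1, ?_, by ring⟩;
         ext a b; fin_cases a <;> fin_cases b <;>
           simp [pauli, Matrix.mul_apply, Fin.sum_univ_two, Matrix.one_apply,
             Complex.ext_iff];
         done)
  exact term_eq ρA Am An U V (pauli i) K hU hVh hVV s hσ hss
end
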